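/- arXiv:2405.04588 — 2 statements merged into one kernel-verified Lean document; each statement's English description precedes it below -/
import Mathlib

section
/- Let e and f be orthogonal idempotents in a prime ring R such that the corner rings eRe and fRf (with unities e and f respectively) are division rings. Then there exist elements u ∈ eRf and v ∈ fRe such that uv = e and vu = f. -/
/-- Let `e` and `f` be orthogonal idempotents in a prime ring `R` such that the corner
rings `eRe` and `fRf` are division rings (they are nonzero and every nonzero element has a
two-sided inverse with respect to the respective unity `e` or `f`).  Then there exist
`u ∈ eRf` and `v ∈ fRe` with `uv = e` and `vu = f`. -/
theorem exists_uv_of_orthogonal_division_corners (R : Type*) [Ring R]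
    (hprime : ∀ a b : R, (∀ x : R, a * x * b = 0) → a = 0 ∨ b = 0)
    (e f : R) (he : e * e = e) (hf : f * f = f) (hef : e * f = 0) (hfe : f * e = 0)
    (hene : e ≠ 0) (hfne : f ≠ 0)
    (heD : ∀ x : R, e * x * e = x → x ≠ 0 → ∃ y : R, e * y * e = y ∧ x * y = e ∧ y * x = e)
    (hfD : ∀ x : R, f * x * f = x → x ≠ 0 → ∃ y : R, f * y * f = y ∧ x * y = f ∧ y * x = f) :
    ∃ u v : R, e * u * f = u ∧ f * v * e = v ∧ u * v = e ∧ v * u = f := by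
  -- eRf ≠ 0
  have h1 : ∃ x : R, e * x * f ≠ 0 := by
    by_contra h
    push_neg at h
    rcases hprime e f h with h' | h' <;> [exact hene h'; exact hfne h']
  obtain ⟨x, hx⟩ := h1
  set u := e * x * f with hu_def
  have heu : e * u = u := by rw [hu_def]; rw [show e * (e * x * f) = e * e * x * f by noncomm_ring, he]
  have huf : u * f = u := by rw [hu_def]; rw [show e * x * f * f = e * x * (f * f) by noncomm_ring, hf]
  -- u R u ≠ 0
  have h2 : ∃ y : R, u * y * u ≠ 0 := by
    by_contra h
    push_neg at h
    rcases hprime u u h with h' | h' <;> exact hx h'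
  obtain ⟨y, hy⟩ := h2
  set v₀ := f * y * e with hv0_def
  have hfv0 : f * v₀ = v₀ := by
    rw [hv0_def, show f * (f * y * e) = f * f * y * e by noncomm_ring, hf]
  have hv0e : v₀ * e = v₀ := by
    rw [hv0_def, show f * y * e * e = f * y * (e * e) by noncomm_ring, he]
  have key : u * v₀ * u = u * y * u := by
    rw [hv0_def, show u * (f * y * e) * u = (u * f) * y * (e * u) by noncomm_ring, huf, heu]
  set w := u * v₀ with hw_def
  have hw_corner : e * w * e = w := by
    rw [hw_def, show e * (u * v₀) * e = (e * u) * (v₀ * e) by noncomm_ring, heu, hv0e]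
  have hw_ne : w ≠ 0 := by
    intro h
    apply hy
    rw [← key, h, zero_mul]
  obtain ⟨a, ha_corner, hwa, haw⟩ := heD w hw_corner hw_ne
  have hae : a * e = a := by
    rw [← ha_corner, mul_assoc (e * a), he]
  have hea : e * a = a := by
    conv_lhs => rw [← ha_corner, show e * (e * a * e) = e * e * a * e from by noncomm_ring, he]
    rw [ha_corner]
  refine ⟨u, v₀ * a, ?_, ?_, ?_, ?_⟩
  · rw [heu, huf]
  · rw [show f * (v₀ * a) * e = (f * v₀) * (a * e) by noncomm_ring, hfv0, hae]
  · rw [show u * (v₀ * a) = (u * v₀) * a by noncomm_ring, ← hw_def, hwa]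
  · -- g := v₀ * a * u is a nonzero idempotent in fRf
    set g := v₀ * a * u with hg_def
    have hguv : u * (v₀ * a) = e := by
      rw [show u * (v₀ * a) = (u * v₀) * a by noncomm_ring, ← hw_def, hwa]
    have hgg : g * g = g := by
      rw [hg_def, show v₀ * a * u * (v₀ * a * u) = v₀ * a * (u * (v₀ * a)) * u by noncomm_ring,
        hguv, show v₀ * a * e * u = v₀ * (a * e) * u by noncomm_ring, hae]
    have hfg : f * g * f = g := by
      rw [hg_def, show f * (v₀ * a * u) * f = (f * v₀) * a * (u * f) by noncomm_ring, hfv0, huf]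
    have hgne : g ≠ 0 := by
      intro h
      apply hene
      have : e * e = u * (v₀ * a) * (u * (v₀ * a)) := by rw [hguv]
      rw [he] at this
      rw [this, show u * (v₀ * a) * (u * (v₀ * a)) = u * (v₀ * a * u) * (v₀ * a) by noncomm_ring,
        ← hg_def, h, mul_zero, zero_mul]
    obtain ⟨b, _, hgb, _⟩ := hfD g hfg hgne
    have hgf : g * f = g := by
      conv_lhs => rw [← hfg]
      rw [show f * g * f * f = f * g * (f * f) by noncomm_ring, hf, hfg]
    calc v₀ * a * u = g := rfl
      _ = g * f := hgf.symm
      _ = g * (g * b) := by rw [hgb]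
      _ = (g * g) * b := by noncomm_ring
      _ = g * b := by rw [hgg]
      _ = f := hgb
end

section
/- Let e and f be orthogonal idempotents in a prime ring R such that the corner rings eRe and fRf are division rings. Then the corner ring (e+f)R(e+f) is isomorphic as a ring to the 2×2 matrix ring M_2(eRe). -/
/-- The additive subgroup underlying the corner ring `eRe`. -/
def cornerAddSubgroup {R : Type*} [Ring R] (e : R) : AddSubgroup R where
  carrier := {x | e * x * e = x}
  add_mem' := by intro a b ha hb; simp only [Set.mem_setOf_eq] at *; rw [mul_add, add_mul, ha, hb]
  zero_mem' := by simp
  neg_mem' := by intro a ha; simp only [Set.mem_setOf_eq] at *; rw [mul_neg, neg_mul, ha]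

/-- The corner ring `eRe` associated with an idempotent `e` of a ring `R`:
its elements are the `x ∈ R` with `e * x * e = x`. -/
def Corner {R : Type*} [Ring R] (e : R) (_he : e * e = e) : Type _ :=
  cornerAddSubgroup e

namespace Corner

variable {R : Type*} [Ring R] {e : R} {he : e * e = e}

theorem prop (a : Corner e he) : e * a.1 * e = a.1 := a.2

instance : AddCommGroup (Corner e he) :=
  inferInstanceAs (AddCommGroup (cornerAddSubgroup e))

theorem left_absorb (a : Corner e he) : e * a.1 = a.1 := by
  conv_lhs => rw [← prop a]
  rw [← mul_assoc, ← mul_assoc, he, prop a]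

theorem right_absorb (a : Corner e he) : a.1 * e = a.1 := by
  conv_lhs => rw [← prop a]
  rw [mul_assoc, mul_assoc, he, ← mul_assoc, prop a]

instance instRing : Ring (Corner e he) :=
  { (inferInstanceAs (AddCommGroup (Corner e he)) : AddCommGroup (Corner e he)) with
    mul := fun a b => ⟨a.1 * b.1, by
      show e * (a.1 * b.1) * e = a.1 * b.1
      rw [mul_assoc, mul_assoc, right_absorb b, ← mul_assoc, left_absorb a]⟩
    one := ⟨e, by show e * e * e = e; rw [he, he]⟩
    mul_assoc := fun a b c => Subtype.ext (mul_assoc a.1 b.1 c.1)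
    one_mul := fun a => Subtype.ext (left_absorb a)
    mul_one := fun a => Subtype.ext (right_absorb a)
    left_distrib := fun a b c => Subtype.ext (mul_add a.1 b.1 c.1)
    right_distrib := fun a b c => Subtype.ext (add_mul a.1 b.1 c.1)
    zero_mul := fun a => Subtype.ext (zero_mul a.1)
    mul_zero := fun a => Subtype.ext (mul_zero a.1) }

@[simp] theorem val_mul (a b : Corner e he) : (a * b).1 = a.1 * b.1 := rfl
@[simp] theorem val_add (a b : Corner e he) : (a + b).1 = a.1 + b.1 := rfl
@[simp] theorem val_one : (1 : Corner e he).1 = e := rfl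
@[simp] theorem val_zero : (0 : Corner e he).1 = 0 := rfl

end Corner


/-!
By primeness `eRf ≠ 0`; picking `u ∈ eRf` and `w ∈ fRe` with `uw ≠ 0` and inverting `uw` in
the division ring `eRe` gives `v ∈ fRe` with `uv = e`. Then `vu` is a nonzero idempotent of the
division ring `fRf`, so `vu = f`. Now `e, u, v, f` form a system of 2 × 2 matrix units whose
identity is `e + f`, and any such system identifies `(e+f)R(e+f)` with `M₂(eRe)`.
-/

namespace Corner

variable {R : Type*} [Ring R] {e : R} {he : e * e = e}

@[simp] theorem val_sum {ι : Type*} (s : Finset ι) (a : ι → Corner e he) :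
    (∑ i ∈ s, a i).1 = ∑ i ∈ s, (a i).1 :=
  map_sum (AddMonoidHom.mk' (fun a : Corner e he => a.1) val_add) a s

/-- `row i` and `col i` play the roles of the matrix units `e₁ᵢ` and `eᵢ₁`, with `e = e₁₁`
and `g = ∑ eᵢᵢ`. -/
def ringEquivMatrix {ι : Type*} [Fintype ι] [DecidableEq ι] {g : R} (hg : g * g = g)
    (row col : ι → R) (h_row : ∀ i, e * row i = row i) (h_col : ∀ i, col i * e = col i)
    (h_mul : ∀ i j, row i * col j = if i = j then e else 0)
    (h_sum : ∑ i, col i * row i = g) :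
    Corner g hg ≃+* Matrix ι ι (Corner e he) :=
  have row_g (i : ι) : row i * g = row i := by
    simp only [← h_sum, Finset.mul_sum, ← mul_assoc, h_mul, ite_mul, zero_mul,
      Finset.sum_ite_eq, Finset.mem_univ, if_true, h_row]
  have g_col (j : ι) : g * col j = col j := by
    simp only [← h_sum, Finset.sum_mul, mul_assoc, h_mul, mul_ite, mul_zero,
      Finset.sum_ite_eq', Finset.mem_univ, if_true, h_col]
  { toFun := fun z => Matrix.of fun i j =>
      ⟨row i * z.1 * col j, show e * (row i * z.1 * col j) * e = _ by
        rw [← mul_assoc, ← mul_assoc, h_row, mul_assoc, h_col]⟩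
    invFun := fun M =>
      ⟨∑ i, ∑ j, col i * (M i j).1 * row j, show g * _ * g = _ by
        simp only [Finset.mul_sum, Finset.sum_mul, ← mul_assoc, g_col]
        simp only [mul_assoc, row_g]⟩
    left_inv := fun z => Subtype.ext <| by
      calc ∑ i, ∑ j, col i * (row i * z.1 * col j) * row j
          = (∑ i, col i * row i) * z.1 * ∑ j, col j * row j := by
            rw [Finset.sum_mul, Finset.sum_mul]
            simp only [Finset.mul_sum, mul_assoc]
        _ = z.1 := by rw [h_sum, z.prop]
    right_inv := fun M => by
      ext i j
      apply Subtype.ext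
      change row i * (∑ k, ∑ l, col k * (M k l).1 * row l) * col j = (M i j).1
      have h (k l : ι) : row i * (col k * (M k l).1 * row l) * col j
          = row i * col k * (M k l).1 * (row l * col j) := by
        simp only [mul_assoc]
      simp [Finset.mul_sum, Finset.sum_mul, h, h_mul, (M i j).prop]
    map_mul' := fun x y => by
      ext i j
      apply Subtype.ext
      rw [Matrix.mul_apply, val_sum]
      calc row i * (x.1 * y.1) * col j
          = row i * (x.1 * (∑ k, col k * row k) * y.1) * col j := by rw [h_sum, right_absorb x]
        _ = ∑ k, row i * x.1 * col k * (row k * y.1 * col j) := by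
            simp only [Finset.mul_sum, Finset.sum_mul, mul_assoc]
    map_add' := fun x y => by
      ext i j
      apply Subtype.ext
      change row i * (x.1 + y.1) * col j = row i * x.1 * col j + row i * y.1 * col j
      rw [mul_add, add_mul] }

def ringEquivMatrixFinTwo {f u v : R} (hg : (e + f) * (e + f) = e + f)
    (heu : e * u = u) (hve : v * e = v) (hue : u * e = 0) (hev : e * v = 0)
    (huv : u * v = e) (hvu : v * u = f) :
    Corner (e + f) hg ≃+* Matrix (Fin 2) (Fin 2) (Corner e he) :=
  ringEquivMatrix hg ![e, u] ![e, v]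
    (fun i => by fin_cases i <;> simp [he, heu])
    (fun i => by fin_cases i <;> simp [he, hve])
    (fun i j => by fin_cases i <;> fin_cases j <;> simp [he, hue, hev, huv])
    (by simp [Fin.sum_univ_two, he, hvu])

end Corner

section PrimeRing

variable {R : Type*} [Ring R]

theorem exists_mul_mul_ne_zero_of_prime
    (hprime : ∀ a b : R, (∀ x : R, a * x * b = 0) → a = 0 ∨ b = 0)
    {a b : R} (ha : a ≠ 0) (hb : b ≠ 0) : ∃ x, a * x * b ≠ 0 := by
  by_contra! h
  exact (hprime a b h).elim ha hb

theorem eq_of_mul_self_eq_of_corner_division {f x : R} (hf : f * f = f)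
    (hfD : ∀ x : R, f * x * f = x → x ≠ 0 → ∃ y : R, f * y * f = y ∧ x * y = f ∧ y * x = f)
    (hx : f * x * f = x) (hxx : x * x = x) (hx0 : x ≠ 0) : x = f := by
  obtain ⟨y, -, hxy, -⟩ := hfD x hx hx0
  calc x = x * f := by rw [← hx, mul_assoc (f * x) f f, hf]
    _ = x * x * y := by rw [← hxy, mul_assoc]
    _ = f := by rw [hxx, hxy]

theorem exists_mul_eq_of_prime_of_corner_division
    (hprime : ∀ a b : R, (∀ x : R, a * x * b = 0) → a = 0 ∨ b = 0)
    {e f : R} (he : e * e = e) (hf : f * f = f) (hene : e ≠ 0) (hfne : f ≠ 0)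
    (heD : ∀ x : R, e * x * e = x → x ≠ 0 → ∃ y : R, e * y * e = y ∧ x * y = e ∧ y * x = e) :
    ∃ u v : R, u ≠ 0 ∧ e * u = u ∧ u * f = u ∧ f * v = v ∧ v * e = v ∧ u * v = e := by
  obtain ⟨a, ha⟩ := exists_mul_mul_ne_zero_of_prime hprime hene hfne
  set u := e * a * f
  have heu : e * u = u := by simp only [u, ← mul_assoc, he]
  have huf : u * f = u := by simp only [u, mul_assoc, hf]
  obtain ⟨x, hx⟩ := exists_mul_mul_ne_zero_of_prime hprime ha ha
  set w := f * x * e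
  have hfw : f * w = w := by simp only [w, ← mul_assoc, hf]
  have hwe : w * e = w := by simp only [w, mul_assoc, he]
  have huw : e * (u * w) * e = u * w := by rw [← mul_assoc, heu, mul_assoc, hwe]
  have huw0 : u * w ≠ 0 := fun h0 => hx <| by
    calc u * x * u = u * w * u := by simp only [w, ← mul_assoc, huf]; rw [mul_assoc _ e, heu]
      _ = 0 := by rw [h0, zero_mul]
  obtain ⟨t, hte, hut, -⟩ := heD (u * w) huw huw0
  have hte' : t * e = t := by rw [← hte, mul_assoc, he]
  exact ⟨u, w * t, ha, heu, huf, by rw [← mul_assoc, hfw], by rw [mul_assoc, hte'],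
    by rw [← mul_assoc, hut]⟩

end PrimeRing

/-- Let `e` and `f` be orthogonal idempotents in a prime ring `R` such that the corner
rings `eRe` and `fRf` are division rings (they are nonzero and every nonzero element has a
two-sided inverse with respect to the respective unity).  Then the corner ring
`(e+f)R(e+f)` is isomorphic as a ring to `M₂(eRe)`. -/
theorem corner_add_ringEquiv_matrix (R : Type*) [Ring R]
    (hprime : ∀ a b : R, (∀ x : R, a * x * b = 0) → a = 0 ∨ b = 0)
    (e f : R) (he : e * e = e) (hf : f * f = f) (hef : e * f = 0) (hfe : f * e = 0)
    (hene : e ≠ 0) (hfne : f ≠ 0)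
    (heD : ∀ x : R, e * x * e = x → x ≠ 0 → ∃ y : R, e * y * e = y ∧ x * y = e ∧ y * x = e)
    (hfD : ∀ x : R, f * x * f = x → x ≠ 0 → ∃ y : R, f * y * f = y ∧ x * y = f ∧ y * x = f) :
    Nonempty (Corner (e + f)
        (by rw [add_mul, mul_add, mul_add, he, hf, hef, hfe, add_zero, zero_add])
      ≃+* Matrix (Fin 2) (Fin 2) (Corner e he)) := by
  obtain ⟨u, v, hu0, heu, huf, hfv, hve, huv⟩ :=
    exists_mul_eq_of_prime_of_corner_division hprime he hf hene hfne heD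
  have hvu : v * u = f :=
    eq_of_mul_self_eq_of_corner_division hf hfD (by rw [← mul_assoc, hfv, mul_assoc, huf])
      (by rw [mul_assoc, ← mul_assoc u, huv, heu])
      (fun h0 => hu0 <| by rw [← heu, ← huv, mul_assoc, h0, mul_zero])
  have hue : u * e = 0 := by rw [← huf, mul_assoc, hfe, mul_zero]
  have hev : e * v = 0 := by rw [← hfv, ← mul_assoc, hef, zero_mul]
  exact ⟨Corner.ringEquivMatrixFinTwo _ heu hve hue hev huv hvu⟩
end
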